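/- Let Σ₂ = {a,b} and w, w' ∈ Σ₂* with w ∼_k w' and m := ι(w) = ι(w') < k. Then m(w) = m(w'), and consequently β_i = β_i' for all i ∈ [m], where β_i, β_i' are the β-factors of the α-β-factorizations of w and w'. -/

import Mathlib

open List

variable {α : Type*} [DecidableEq α] [Fintype α]

/-- Simon `k`-congruence: `u` and `v` have the same scattered factors
(subsequences) of length at most `k`. -/
def SimonCongr (k : ℕ) (u v : List α) : Prop :=
  ∀ s : List α, s.length ≤ k → (s.Sublist u ↔ s.Sublist v)

/-- `w` is `k`-universal with respect to the alphabet `S`: every word of length `k`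
over `S` is a scattered factor of `w`. -/
def UniversalOn (S : Finset α) (k : ℕ) (w : List α) : Prop :=
  ∀ s : List α, s.length = k → (∀ x ∈ s, x ∈ S) → s.Sublist w

/-- The universality index of `w` w.r.t. the alphabet `S`. -/
noncomputable def iotaOn (S : Finset α) (w : List α) : ℕ :=
  sSup {k | UniversalOn S k w}

/-- The universality index of `w` w.r.t. the full alphabet. -/
noncomputable def iotaUniv (w : List α) : ℕ := iotaOn Finset.univ w

/-- `a` is an arch w.r.t. `S`: it contains every letter of `S`, and its last letter
belongs to `S` and occurs exactly once in `a`. -/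
def IsArchOn (S : Finset α) (a : List α) : Prop :=
  (∀ x ∈ S, x ∈ a) ∧ ∃ a' x, a = a' ++ [x] ∧ x ∈ S ∧ x ∉ a'

/-- `(ars, r)` is the arch factorization of `w` w.r.t. `S`. -/
def IsArchFactOn (S : Finset α) (w : List α) (ars : List (List α)) (r : List α) : Prop :=
  w = ars.flatten ++ r ∧ (∀ a ∈ ars, IsArchOn S a) ∧ ¬ (∀ x ∈ S, x ∈ r)

/-- `(A, B)` is the α-β-factorization of `w` with `m` arches:
`αᵢ₋₁βᵢ` (for `i ∈ [m]`) together with rest `α_m` is the arch factorization of `w`, and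
`(β_{m-i}α_{m-i})^R` together with rest `α₀^R` is the arch factorization of `w^R`. -/
def IsAlphaBetaFact (w : List α) (m : ℕ) (A B : ℕ → List α) : Prop :=
  IsArchFactOn Finset.univ w (List.ofFn fun i : Fin m => A i.val ++ B (i.val + 1)) (A m) ∧
  IsArchFactOn Finset.univ w.reverse
    (List.ofFn fun i : Fin m => (B (m - i.val) ++ A (m - i.val)).reverse) ((A 0).reverse)

/-- The concatenation `αᵢ βᵢ₊₁ αᵢ₊₁ ⋯ βⱼ αⱼ`. -/
def abSeg (A B : ℕ → List α) (i j : ℕ) : List α :=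
  A i ++ (((List.Ico (i + 1) (j + 1)).map fun l => B l ++ A l).flatten)

/-- The core of a `β`-factor: the factor with its first and last letter removed. -/
def coreOf (b : List α) : List α := (b.drop 1).dropLast

/-! Over `{a, b}` every arch has the form `b^p a` or `a^p b` with `p ≥ 1`. If the first arches of
`w ∼_k w'` ended in different letters, the words `ba·z` (in `w`) and `ab·z` (in `w'`), with `z`
ranging over the `(m-1)`-universal remainders, transfer across the congruence and make `w'`
`(m+1)`-universal, which is impossible with `m` arches; since the first arch ends in a letter
absent from the rest of it, it can then be cancelled from both sides and the argument repeated.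
This gives `m(w) = m(w')` and, applied to the reversed words, `m(w^R) = m(w'^R)`. Finally a
binary `β`-factor is a nonempty suffix of `b^p a` and a nonempty prefix of `c d^q`
(`{c, d} = {a, b}`), so it is `a` or `ba`: it is fixed by its first letter, read off from
`m(w^R)`, and its last letter, read off from `m(w)`. -/

omit [DecidableEq α] [Fintype α]

namespace List

theorem sublist_of_cons_sublist_append_cons {x : α} {u l s : List α} (hx : x ∉ u)
    (h : x :: l <+ u ++ x :: s) : l <+ s := by
  induction u with
  | nil => exact cons_sublist_cons.mp h
  | cons y u ih =>
    cases h with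
    | cons _ h => exact ih (fun hu => hx (mem_cons_of_mem y hu)) h
    | cons_cons _ _ => exact absurd mem_cons_self hx

theorem cons_sublist_replicate_append {c : α} {n : ℕ} {l s : List α} (hn : 0 < n)
    (h : l <+ s) : c :: l <+ replicate n c ++ s := by
  obtain ⟨n, rfl⟩ := Nat.exists_eq_add_one.mpr hn
  exact (h.trans (sublist_append_right _ s)).cons_cons c

theorem eq_cons_replicate_of_prefix {c d : α} {n : ℕ} {b : List α} (hb : b ≠ [])
    (h : b <+: c :: replicate n d) : ∃ t, b = c :: replicate t d := by
  obtain rfl | ⟨t, rfl, ht⟩ := prefix_cons_iff.mp h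
  · exact absurd rfl hb
  · exact ⟨t.length, by rw [← (prefix_replicate_iff.mp ht).2]⟩

end List

section SimonCongr

variable {k l : ℕ} {u v : List α}

theorem SimonCongr.mono (hkl : k ≤ l) (h : SimonCongr l u v) : SimonCongr k u v :=
  fun s hs => h s (hs.trans hkl)

theorem SimonCongr.reverse (h : SimonCongr k u v) : SimonCongr k u.reverse v.reverse := by
  intro s hs
  rw [sublist_reverse_iff, sublist_reverse_iff]
  exact h s.reverse (by simpa using hs)

theorem SimonCongr.of_append_cons {x : α} {u' w w' : List α} (hu : x ∉ u) (hu' : x ∉ u')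
    (h : SimonCongr (k + 1) (u ++ x :: w) (u' ++ x :: w')) : SimonCongr k w w' := by
  intro s hs
  have hxs : (x :: s).length ≤ k + 1 := by simpa using hs
  constructor
  · intro hsw
    exact sublist_of_cons_sublist_append_cons hu'
      ((h _ hxs).mp ((hsw.cons_cons x).trans (sublist_append_right u _)))
  · intro hsw
    exact sublist_of_cons_sublist_append_cons hu
      ((h _ hxs).mpr ((hsw.cons_cons x).trans (sublist_append_right u' _)))

end SimonCongr

section Arches

variable {S : Finset α} {w r : List α} {ars : List (List α)}

theorem IsArchOn.eq_nil_of_append {u v : List α} (h : IsArchOn S (u ++ v))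
    (hu : ∀ x ∈ S, x ∈ u) : v = [] := by
  obtain ⟨-, a, x, he, hxS, hxa⟩ := h
  rcases prefix_concat_iff.mp (he ▸ prefix_append u v) with rfl | hpre
  · simpa using he
  · exact absurd (hpre.subset (hu x hxS)) hxa

theorem IsArchFactOn.of_cons {a : List α} (h : IsArchFactOn S w (a :: ars) r) :
    w = a ++ (ars.flatten ++ r) ∧ IsArchOn S a ∧ IsArchFactOn S (ars.flatten ++ r) ars r := by
  obtain ⟨rfl, harch, hr⟩ := h
  exact ⟨by simp, harch a mem_cons_self, rfl, fun b hb => harch b (mem_cons_of_mem a hb), hr⟩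

theorem IsArchFactOn.universalOn (h : IsArchFactOn S w ars r) : UniversalOn S ars.length w := by
  induction ars generalizing w with
  | nil => rintro s hs -; simp [length_eq_zero_iff.mp hs]
  | cons a ars ih =>
    obtain ⟨rfl, ha, h₀⟩ := h.of_cons
    rintro (_ | ⟨c, s⟩) hs hsS
    · simp at hs
    · exact cons_sublist_iff.mpr ⟨a, _, rfl, ha.1 c (hsS c mem_cons_self),
        ih h₀ s (by simpa using hs) fun y hy => hsS y (mem_cons_of_mem c hy)⟩

theorem IsArchFactOn.not_universalOn (h : IsArchFactOn S w ars r) :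
    ¬ UniversalOn S (ars.length + 1) w := by
  induction ars generalizing w with
  | nil =>
    obtain ⟨rfl, -, hr⟩ := h
    obtain ⟨c, hcS, hc⟩ := not_forall₂.mp hr
    exact fun hu => hc (by simpa using hu [c] rfl (by simpa using hcS))
  | cons a ars ih =>
    obtain ⟨rfl, ⟨-, a₀, x, rfl, hxS, hx⟩, h₀⟩ := h.of_cons
    refine fun hu => ih h₀ fun s hs hsS => sublist_of_cons_sublist_append_cons hx ?_
    simpa using hu (x :: s) (by simpa using hs) (by simpa [hxS] using hsS)

end Arches

section Binary

theorem IsArchOn.exists_eq_replicate_not_append {a : List Bool} (h : IsArchOn Finset.univ a) :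
    ∃ x p, 0 < p ∧ a = replicate p (!x) ++ [x] := by
  obtain ⟨hall, a, x, rfl, -, hx⟩ := h
  have ha : a = replicate a.length (!x) :=
    eq_replicate_iff.mpr ⟨rfl, fun y hy => by cases x <;> cases y <;> simp_all⟩
  have hnx : (!x) ∈ a := by simpa using hall (!x) (Finset.mem_univ _)
  exact ⟨x, a.length, length_pos_of_mem hnx, by rw [← ha]⟩

theorem universalOn_of_simonCongr_replicate {x : Bool} {p q n : ℕ} {w w' : List Bool}
    (hp : 0 < p) (hq : 0 < q)
    (hw : UniversalOn Finset.univ n w) (hw' : UniversalOn Finset.univ n w')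
    (h : SimonCongr (n + 2) (replicate p (!x) ++ x :: w) (replicate q x ++ (!x) :: w')) :
    UniversalOn Finset.univ (n + 2) (replicate q x ++ (!x) :: w') := by
  have hW (z : List Bool) (hz : z.length = n) : z <+ w := hw z hz (by simp)
  have hW' (z : List Bool) (hz : z.length = n) : z <+ w' := hw' z hz (by simp)
  have hxW' (z : List Bool) (hz : z.length = n) : x :: z <+ w' :=
    sublist_of_cons_sublist_append_cons (by simp) <| (h _ (by simp [hz])).mp <|
      cons_sublist_replicate_append hp ((hW z hz).cons_cons x)
  have hnxW (z : List Bool) (hz : z.length = n) : (!x) :: z <+ w :=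
    sublist_of_cons_sublist_append_cons (by simp) <| (h _ (by simp [hz])).mpr <|
      cons_sublist_replicate_append hq ((hW' z hz).cons_cons (!x))
  rintro (_ | ⟨c, _ | ⟨d, z⟩⟩) hz - <;> simp only [length_cons, length_nil] at hz
  · omega
  · omega
  have hz : z.length = n := by omega
  obtain rfl | rfl : c = x ∨ c = !x := by cases c <;> cases x <;> simp
  · obtain rfl | rfl : d = c ∨ d = !c := by cases d <;> cases c <;> simp
    · exact cons_sublist_replicate_append hq ((hxW' z hz).cons _)
    · exact cons_sublist_replicate_append hq ((hW' z hz).cons_cons _)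
  · obtain rfl | rfl : d = x ∨ d = !x := by cases d <;> cases x <;> simp
    · exact ((hxW' z hz).cons_cons _).trans (sublist_append_right _ _)
    · exact (h _ (by simp [hz])).mp (cons_sublist_replicate_append hp ((hnxW z hz).cons _))

theorem IsArchFactOn.map_getLast?_eq_of_simonCongr {w w' r r' : List Bool}
    {ars ars' : List (List Bool)}
    (h : IsArchFactOn Finset.univ w ars r) (h' : IsArchFactOn Finset.univ w' ars' r')
    (hlen : ars.length = ars'.length) (hc : SimonCongr (ars.length + 1) w w') :
    ars.map getLast? = ars'.map getLast? := by
  induction ars generalizing w w' ars' with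
  | nil => simp [length_eq_zero_iff.mp hlen.symm]
  | cons a ars ih =>
    obtain _ | ⟨a', ars'⟩ := ars'
    · simp at hlen
    obtain ⟨rfl, ha, h₀⟩ := h.of_cons
    obtain ⟨rfl, ha', h₀'⟩ := h'.of_cons
    obtain ⟨x, p, hp, rfl⟩ := ha.exists_eq_replicate_not_append
    obtain ⟨x', q, hq, rfl⟩ := ha'.exists_eq_replicate_not_append
    simp only [length_cons, Nat.add_right_cancel_iff] at hlen hc
    simp only [append_assoc, singleton_append] at hc
    obtain rfl : x' = x := by
      by_contra hne
      obtain rfl : x' = !x := by cases x <;> cases x' <;> simp_all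
      rw [Bool.not_not] at hc
      refine h'.not_universalOn ?_
      simpa [hlen] using universalOn_of_simonCongr_replicate hp hq h₀.universalOn
        (hlen ▸ h₀'.universalOn) hc
    simp [ih h₀ h₀' hlen (hc.of_append_cons (by simp) (by simp))]

theorem eq_ite_of_isArchOn_append {a₁ b a₂ : List Bool} (hb : b ≠ [])
    (h₁ : IsArchOn Finset.univ (a₁ ++ b)) (h₂ : IsArchOn Finset.univ (b ++ a₂).reverse) :
    ∃ u x, b.head? = some u ∧ b.getLast? = some x ∧ b = if u = x then [x] else [u, x] := by
  obtain ⟨x, p, -, he₁⟩ := h₁.exists_eq_replicate_not_append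
  obtain ⟨u, q, -, he₂⟩ := h₂.exists_eq_replicate_not_append
  have hsuf : b.reverse <+: x :: replicate p (!x) := by
    have := reverse_prefix.mpr (suffix_append a₁ b)
    rwa [he₁, reverse_append, reverse_replicate, reverse_singleton, singleton_append] at this
  have hba : b ++ a₂ = u :: replicate q (!u) := by simpa using congrArg reverse he₂
  obtain ⟨t, ht⟩ := eq_cons_replicate_of_prefix (by simpa using hb) hsuf
  obtain ⟨s, rfl⟩ := eq_cons_replicate_of_prefix hb (hba ▸ prefix_append b a₂)
  refine ⟨u, x, rfl, by rw [← head?_reverse, ht]; rfl, ?_⟩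
  simp only [reverse_cons, reverse_replicate] at ht
  rcases s with _ | _ | s <;> rcases t with _ | _ | t <;>
    cases u <;> cases x <;> simp_all [replicate_succ]

end Binary

section AlphaBeta

variable [Fintype α] {w : List α} {m i : ℕ} {A B : ℕ → List α}

theorem IsAlphaBetaFact.isArchOn_alpha_append_beta (h : IsAlphaBetaFact w m A B) (hi : i < m) :
    IsArchOn Finset.univ (A i ++ B (i + 1)) :=
  h.1.2.1 _ (mem_ofFn.mpr ⟨⟨i, hi⟩, rfl⟩)

theorem IsAlphaBetaFact.isArchOn_reverse_beta_append_alpha (h : IsAlphaBetaFact w m A B)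
    (hi : 1 ≤ i) (him : i ≤ m) : IsArchOn Finset.univ (B i ++ A i).reverse := by
  have := h.2.2.1 _ (mem_ofFn.mpr ⟨⟨m - i, by omega⟩, rfl⟩)
  rwa [Nat.sub_sub_self him] at this

theorem IsAlphaBetaFact.beta_ne_nil (h : IsAlphaBetaFact w m A B) (hi : 1 ≤ i) (him : i ≤ m) :
    B i ≠ [] := by
  intro hB
  have hA (j : ℕ) (hj : 1 ≤ j) (hjm : j ≤ m) (hBj : B j = []) (x : α) : x ∈ A j := by
    simpa [hBj] using (h.isArchOn_reverse_beta_append_alpha hj hjm).1 x (Finset.mem_univ x)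
  -- an empty `βⱼ` makes `αⱼ` complete, which forces `βⱼ₊₁` to be empty as well
  have hBj (j : ℕ) (hij : i ≤ j) : j ≤ m → B j = [] := by
    induction j, hij using Nat.le_induction with
    | base => exact fun _ => hB
    | succ j hij ih =>
      exact fun hjm => (h.isArchOn_alpha_append_beta hjm).eq_nil_of_append
        fun x _ => hA j (by omega) (by omega) (ih (by omega)) x
  exact h.1.2.2 fun x _ => hA m (by omega) le_rfl (hBj m him le_rfl) x

end AlphaBeta

section BinaryAlphaBeta

variable {w w' : List Bool} {m i : ℕ} {A B A' B' : ℕ → List Bool}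

theorem IsAlphaBetaFact.getLast?_beta_eq (hw : IsAlphaBetaFact w m A B)
    (hw' : IsAlphaBetaFact w' m A' B') (h : SimonCongr (m + 1) w w') (hi : 1 ≤ i) (him : i ≤ m) :
    (B i).getLast? = (B' i).getLast? := by
  have hmod := hw.1.map_getLast?_eq_of_simonCongr hw'.1 (by simp) (by simpa using h)
  simp only [map_ofFn, ofFn_inj] at hmod
  obtain ⟨j, rfl⟩ := Nat.exists_eq_add_of_le' hi
  simpa [getLast?_append_of_ne_nil _ (hw.beta_ne_nil hi him),
    getLast?_append_of_ne_nil _ (hw'.beta_ne_nil hi him)] using congrFun hmod ⟨j, him⟩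

theorem IsAlphaBetaFact.head?_beta_eq (hw : IsAlphaBetaFact w m A B)
    (hw' : IsAlphaBetaFact w' m A' B') (h : SimonCongr (m + 1) w w') (hi : 1 ≤ i) (him : i ≤ m) :
    (B i).head? = (B' i).head? := by
  have hmod := hw.2.map_getLast?_eq_of_simonCongr hw'.2 (by simp) (by simpa using h.reverse)
  simp only [map_ofFn, ofFn_inj] at hmod
  have := congrFun hmod ⟨m - i, by omega⟩
  simp only [Function.comp_apply, Nat.sub_sub_self him, getLast?_reverse] at this
  rwa [head?_append_of_ne_nil _ (hw.beta_ne_nil hi him),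
    head?_append_of_ne_nil _ (hw'.beta_ne_nil hi him)] at this

theorem IsAlphaBetaFact.exists_beta_eq_ite (hw : IsAlphaBetaFact w m A B) (hi : 1 ≤ i)
    (him : i ≤ m) : ∃ u x, (B i).head? = some u ∧ (B i).getLast? = some x ∧
      B i = if u = x then [x] else [u, x] := by
  obtain ⟨j, rfl⟩ := Nat.exists_eq_add_of_le' hi
  exact eq_ite_of_isArchOn_append (hw.beta_ne_nil hi him) (hw.isArchOn_alpha_append_beta him)
    (hw.isArchOn_reverse_beta_append_alpha hi him)

end BinaryAlphaBeta

theorem binary_simonCongr_implies_beta_eq_general (k m : ℕ) (w w' : List Bool)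
    (A B A' B' : ℕ → List Bool)
    (hw : IsAlphaBetaFact w m A B) (hw' : IsAlphaBetaFact w' m A' B')
    (hmk : m < k)
    (h : SimonCongr k w w') :
    (∀ i, 1 ≤ i → i ≤ m → (B i).getLast? = (B' i).getLast?) ∧
    (∀ i, 1 ≤ i → i ≤ m → B i = B' i) := by
  have hc : SimonCongr (m + 1) w w' := h.mono hmk
  refine ⟨fun i hi him => hw.getLast?_beta_eq hw' hc hi him, fun i hi him => ?_⟩
  obtain ⟨u, x, hu, hx, hB⟩ := hw.exists_beta_eq_ite hi him
  obtain ⟨u', x', hu', hx', hB'⟩ := hw'.exists_beta_eq_ite hi him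
  have hxx' : x = x' := Option.some_inj.mp (hx ▸ hx' ▸ hw.getLast?_beta_eq hw' hc hi him)
  have huu' : u = u' := Option.some_inj.mp (hu ▸ hu' ▸ hw.head?_beta_eq hw' hc hi him)
  rw [hB, hB', hxx', huu']

/-- `k`-congruent binary words with the same universality `m < k`
have the same modus and hence identical `β`-factors. -/
theorem binary_simonCongr_implies_beta_eq (k m : ℕ) (w w' : List Bool)
    (A B A' B' : ℕ → List Bool)
    (hw : IsAlphaBetaFact w m A B) (hw' : IsAlphaBetaFact w' m A' B')
    (hiw : iotaUniv w = m) (hiw' : iotaUniv w' = m) (hmk : m < k)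
    (h : SimonCongr k w w') :
    (∀ i, 1 ≤ i → i ≤ m → (B i).getLast? = (B' i).getLast?) ∧
    (∀ i, 1 ≤ i → i ≤ m → B i = B' i) :=
  binary_simonCongr_implies_beta_eq_general k m w w' A B A' B' hw hw' hmk h
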